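/- Let H be a real Hilbert space, (φ_ℓ)_{ℓ≥1} an orthonormal family in H, μ_1,…,μ_c ∈ H, and κ ∈ {1,…,c}. Let Y = μ_κ + Σ_{ℓ≥1} A_ℓ φ_ℓ with Σ_ℓ A_ℓ² < ∞. Let β_1,…,β_{c'} ∈ H satisfy ⟨β_j, φ_ℓ⟩ = 0 for all j, ℓ, and β̂_1,…,β̂_{c'} ∈ H satisfy ‖β̂_j − β_j‖ ≤ ε for all j. Define ν_i = (⟨β_1, μ_i⟩,…,⟨β_{c'}, μ_i⟩) ∈ ℝ^{c'} for i = 1,…,c and ν̂ = (⟨β̂_1, Y⟩,…,⟨β̂_{c'}, Y⟩) ∈ ℝ^{c'}. If min_{i ≠ κ} ‖ν_κ − ν_i‖ > 2 √{c'} ε ‖Y‖, then κ is the unique minimizer of i ↦ ‖ν̂ − ν_i‖ over i ∈ {1,…,c}. -/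

import Mathlib

open scoped RealInnerProductSpace

/-! Each `β j` is orthogonal to the noise `Y - μ κ`, so `⟪β j, Y⟫ = ⟪β j, μ κ⟫` and each coordinate
of `ν̂ - ν κ` is `⟪βhat j - β j, Y⟫`, at most `ε ‖Y‖` by Cauchy–Schwarz. Hence `ν̂` lies within
`√c' ε ‖Y‖` of `ν κ`, less than half the distance from `ν κ` to any other centroid, and the
triangle inequality in `ℝ^c'` does the rest. -/

theorem inner_eq_zero_of_hasSum {H ι : Type*} [NormedAddCommGroup H] [InnerProductSpace ℝ H]
    {f : ι → H} {s v : H} (hf : HasSum f s) (h : ∀ i, ⟪v, f i⟫ = 0) : ⟪v, s⟫ = 0 :=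
  (hf.mapL (innerSL ℝ v)).unique (by simp [h])

theorem real_sqrt_sum_sq_le_sqrt_card_mul {ι : Type*} [Fintype ι] {v : ι → ℝ} {r : ℝ}
    (h : ∀ i, |v i| ≤ r) : √(∑ i, v i ^ 2) ≤ √(Fintype.card ι) * r := by
  rcases isEmpty_or_nonempty ι with hι | ⟨⟨i₀⟩⟩
  · simp
  have hr : 0 ≤ r := (abs_nonneg _).trans (h i₀)
  calc √(∑ i, v i ^ 2) ≤ √(∑ _i : ι, r ^ 2) :=
        Real.sqrt_le_sqrt <| Finset.sum_le_sum fun i _ ↦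
          sq_le_sq' (abs_le.mp (h i)).1 (abs_le.mp (h i)).2
    _ = √(Fintype.card ι) * r := by
        rw [Finset.sum_const, Finset.card_univ, nsmul_eq_mul, Real.sqrt_mul (Nat.cast_nonneg _),
          Real.sqrt_sq hr]

theorem EuclideanSpace.dist_toLp_eq {ι : Type*} [Fintype ι] (v w : ι → ℝ) :
    dist (WithLp.toLp 2 v) (WithLp.toLp 2 w) = √(∑ i, (v i - w i) ^ 2) := by
  simp [EuclideanSpace.dist_eq, Real.dist_eq, sq_abs]

theorem dist_lt_dist_of_two_mul_lt {X : Type*} [PseudoMetricSpace X] {u a b : X} {r : ℝ}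
    (hu : dist u a ≤ r) (hab : 2 * r < dist a b) : dist u a < dist u b := by
  linarith [dist_triangle_left a b u]

theorem stmt12_general {H : Type*} [NormedAddCommGroup H] [InnerProductSpace ℝ H]
    (φ : ℕ → H) (c : ℕ) (μ : Fin c → H) (κ : Fin c)
    (A : ℕ → ℝ)
    (Y : H) (hY : HasSum (fun ℓ => A ℓ • φ ℓ) (Y - μ κ))
    (c' : ℕ) (β βhat : Fin c' → H) (ε : ℝ)
    (hβ : ∀ (j : Fin c') (ℓ : ℕ), ⟪β j, φ ℓ⟫ = 0)
    (hβhat : ∀ j, ‖βhat j - β j‖ ≤ ε)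
    (hsep : ∀ i : Fin c, i ≠ κ →
      2 * Real.sqrt c' * ε * ‖Y‖ <
        Real.sqrt (∑ j, (⟪β j, μ κ⟫ - ⟪β j, μ i⟫) ^ 2)) :
    ∀ i : Fin c, i ≠ κ →
      Real.sqrt (∑ j, (⟪βhat j, Y⟫ - ⟪β j, μ κ⟫) ^ 2) <
        Real.sqrt (∑ j, (⟪βhat j, Y⟫ - ⟪β j, μ i⟫) ^ 2) := by
  intro i hi
  have hproj : ∀ j, ⟪β j, Y⟫ = ⟪β j, μ κ⟫ := fun j ↦ by
    have := inner_eq_zero_of_hasSum hY fun ℓ ↦ by rw [real_inner_smul_right, hβ j ℓ, mul_zero]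
    rwa [inner_sub_right, sub_eq_zero] at this
  have hcoord : ∀ j, |⟪βhat j, Y⟫ - ⟪β j, μ κ⟫| ≤ ε * ‖Y‖ := fun j ↦ by
    rw [← hproj j, ← inner_sub_left]
    exact (abs_real_inner_le_norm _ _).trans (mul_le_mul_of_nonneg_right (hβhat j) (norm_nonneg _))
  have hclose := real_sqrt_sum_sq_le_sqrt_card_mul hcoord
  rw [Fintype.card_fin] at hclose
  simp only [← EuclideanSpace.dist_toLp_eq] at hclose hsep ⊢
  exact dist_lt_dist_of_two_mul_lt hclose (by linarith [hsep i hi])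

/-- With `Y = μ κ + ∑' ℓ, A ℓ • φ ℓ`, LDA directions `β j` orthogonal to
every `φ ℓ`, estimates `β̂ j` with `‖β̂ j - β j‖ ≤ ε`, projection centroids
`ν i = (⟪β j, μ i⟫)_j` and estimated projections `ν̂ = (⟪β̂ j, Y⟫)_j`:
if `min_{i ≠ κ} ‖ν κ - ν i‖ > 2 √c' ε ‖Y‖`, then `κ` is the unique minimizer of
`i ↦ ‖ν̂ - ν i‖`. -/
theorem stmt12 {H : Type*} [NormedAddCommGroup H] [InnerProductSpace ℝ H] [CompleteSpace H]
    (φ : ℕ → H) (hφ : Orthonormal ℝ φ) (c : ℕ) (μ : Fin c → H) (κ : Fin c)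
    (A : ℕ → ℝ) (hA : Summable (fun ℓ => (A ℓ) ^ 2))
    (Y : H) (hY : HasSum (fun ℓ => A ℓ • φ ℓ) (Y - μ κ))
    (c' : ℕ) (β βhat : Fin c' → H) (ε : ℝ)
    (hβ : ∀ (j : Fin c') (ℓ : ℕ), ⟪β j, φ ℓ⟫ = 0)
    (hβhat : ∀ j, ‖βhat j - β j‖ ≤ ε)
    (hsep : ∀ i : Fin c, i ≠ κ →
      2 * Real.sqrt c' * ε * ‖Y‖ <
        Real.sqrt (∑ j, (⟪β j, μ κ⟫ - ⟪β j, μ i⟫) ^ 2)) :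
    ∀ i : Fin c, i ≠ κ →
      Real.sqrt (∑ j, (⟪βhat j, Y⟫ - ⟪β j, μ κ⟫) ^ 2) <
        Real.sqrt (∑ j, (⟪βhat j, Y⟫ - ⟪β j, μ i⟫) ^ 2) :=
  stmt12_general φ c μ κ A Y hY c' β βhat ε hβ hβhat hsep
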